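/- For every even n ≥ 8, the graph G_n, defined as the complement of the disjoint union of two cycles of length n/2, is not an autograph. -/

import Mathlib

/-!
Let `ℓ` label the vertices of the complement of two `m`-cycles by a signature, `m ≥ 4`. Vertices
of different cycles are adjacent in the complement, so their label differences are labels; compared
with the greatest label this makes the labels of the other cycle positive. The label `0` is excluded
(it would force `m = 4`) and cycle neighbours get distinct labels, so `ℓ` is injective.

The main tool: a distance-preserving `f : ℤ → ℤ` carrying the labels of one cycle into the labels
is induced by a bijection onto a cycle, since `f` preserves which differences are labels, i.e. cycle
adjacency. With `f t = max - t` this makes the labels of the cycle `Y` without the maximum symmetric;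
with `f t = t - min` it puts the minimum `b` on `Y` and shows that the other cycle carries the labels
`Y + b`. Then distinct labels on `Y` are at least `2b` apart, so they are multiples of `b`; after
dividing by `b`, a parity argument on `Y` below and between the labels `P < Q` of the two neighbours
of the vertex labelled `1` shows `Q - P ∈ Y`, which makes `P - 1` a label although it is the label
difference along an edge.
-/

/-- The disjoint union of two cycles of length `m`, on vertex set `Fin 2 × ZMod m`. -/
def twoCycles (m : ℕ) : SimpleGraph (Fin 2 × ZMod m) where
  Adj x y := x.1 = y.1 ∧ x ≠ y ∧ (x.2 - y.2 = 1 ∨ y.2 - x.2 = 1)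
  symm := by
    constructor
    rintro x y ⟨h1, h2, h3⟩
    exact ⟨h1.symm, h2.symm, h3.symm⟩
  loopless := by
    constructor
    rintro x ⟨-, h, -⟩
    exact h rfl

theorem Int.even_sub_of_sub_two_mem {D : Set ℤ} {a : ℤ} (ha : a - 1 ∉ D)
    (hstep : ∀ t ∈ D, a < t → t - 2 ∈ D) : ∀ t ∈ D, a ≤ t → Even (t - a) := by
  suffices ∀ k : ℕ, ∀ t ∈ D, t - a ≤ k → a ≤ t → Even (t - a) from
    fun t ht hat => this (t - a).toNat t ht (Int.self_le_toNat _) hat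
  intro k
  induction k with
  | zero => intro t _ hk hat; exact ⟨0, by omega⟩
  | succ k ih =>
    intro t ht hk hat
    rcases hat.eq_or_lt with rfl | hat
    · exact ⟨0, by omega⟩
    have ht2 := hstep t ht hat
    have hat2 : a ≤ t - 2 := by
      by_contra! h
      exact ha (by convert ht2 using 1; omega)
    obtain ⟨r, hr⟩ := ih (t - 2) ht2 (by omega) hat2
    exact ⟨r + 1, by omega⟩

/-- The labels of a signature of `(twoCycles m)ᶜ` in normal form: `Y` is the set of labels of
one cycle, whose least element `b` is the least label; the other cycle carries the labels `Y + b`,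
so `z` is a label iff `z ∈ Y ∨ z - b ∈ Y`. The reflection `t ↦ c - t` preserves `Y`, and `P`, `Q`
are the labels of the two neighbours of the vertex labelled `b`. -/
structure LabelPattern (b : ℤ) (Y : Set ℤ) (c P Q : ℤ) : Prop where
  pos : 0 < b
  mem : b ∈ Y
  le : ∀ t ∈ Y, b ≤ t
  reflect_mem : ∀ t ∈ Y, c - t ∈ Y
  add_sub_mem : ∀ s ∈ Y, ∀ t ∈ Y, |s + b - t| ∈ Y ∨ |s + b - t| - b ∈ Y
  P_mem : P ∈ Y
  Q_mem : Q ∈ Y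
  P_ne : P ≠ b
  Q_ne : Q ≠ b
  P_ne_Q : P ≠ Q
  P_sub_notMem : ¬(P - b ∈ Y ∨ P - b - b ∈ Y)
  Q_sub_notMem : ¬(Q - b ∈ Y ∨ Q - b - b ∈ Y)
  sub_mem : ∀ t ∈ Y, t ≠ b → t ≠ P → t ≠ Q → t - b ∈ Y ∨ t - b - b ∈ Y
  abs_sub_mem : |P - Q| ∈ Y ∨ |P - Q| - b ∈ Y

namespace LabelPattern

variable {b : ℤ} {Y T : Set ℤ} {c P Q s t : ℤ}

theorem swap (h : LabelPattern b Y c P Q) : LabelPattern b Y c Q P where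
  __ := h
  P_mem := h.Q_mem
  Q_mem := h.P_mem
  P_ne := h.Q_ne
  Q_ne := h.P_ne
  P_ne_Q := h.P_ne_Q.symm
  P_sub_notMem := h.Q_sub_notMem
  Q_sub_notMem := h.P_sub_notMem
  sub_mem t ht hb hQ hP := h.sub_mem t ht hb hP hQ
  abs_sub_mem := abs_sub_comm P Q ▸ h.abs_sub_mem

theorem le_of_mem_or (h : LabelPattern b Y c P Q) (ht : t ∈ Y ∨ t - b ∈ Y) : b ≤ t := by
  rcases ht with ht | ht
  · exact h.le t ht
  · have := h.le _ ht; have := h.pos; omega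

theorem add_two_mul_le_or (h : LabelPattern b Y c P Q) (hs : s ∈ Y) (ht : t ∈ Y) (hst : s ≠ t) :
    s + 2 * b ≤ t ∨ t + 2 * b ≤ s := by
  have h₁ := h.le_of_mem_or (h.add_sub_mem s hs t ht)
  have h₂ := h.le_of_mem_or (h.add_sub_mem t ht s hs)
  rw [le_abs] at h₁ h₂
  omega

theorem add_notMem (h : LabelPattern b Y c P Q) (ht : t ∈ Y) : t + b ∉ Y := fun ht' => by
  have := h.pos
  have := h.add_two_mul_le_or ht ht' (by omega)
  omega

theorem dvd_of_mem (h : LabelPattern b Y c P Q) (ht : t ∈ Y) : b ∣ t := by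
  have hb := h.pos
  suffices ∀ n : ℕ, ∀ t ∈ Y, t ≤ n → b ∣ t from this t.toNat t ht (Int.self_le_toNat t)
  intro n
  induction n with
  | zero => intro t ht htn; have := h.le t ht; omega
  | succ n ih =>
    intro t ht htn
    rcases eq_or_ne t b with rfl | htb
    · exact dvd_rfl
    have h3b : b + 2 * b ≤ t := by
      have := h.le t ht; have := h.add_two_mul_le_or h.mem ht htb.symm; omega
    have habs : |b + b - t| = t - 2 * b := by rw [abs_of_nonpos (by omega)]; ring
    rcases habs ▸ h.add_sub_mem b h.mem t ht with h₂ | h₃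
    · obtain ⟨k, hk⟩ := ih _ h₂ (by push_cast at htn; omega)
      exact ⟨k + 2, by linear_combination hk⟩
    · obtain ⟨k, hk⟩ := ih _ h₃ (by push_cast at htn; omega)
      exact ⟨k + 3, by linear_combination hk⟩

theorem scale (h : LabelPattern b Y (b * c) (b * P) (b * Q)) :
    LabelPattern 1 {k | b * k ∈ Y} c P Q := by
  have hb := h.pos
  have hinj : ∀ {s t : ℤ}, s ≠ t → b * s ≠ b * t := fun hst e =>
    hst (mul_left_cancel₀ hb.ne' e)
  have habs : ∀ s t : ℤ, |b * s - b * t| = b * |s - t| := fun s t => by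
    rw [← mul_sub, abs_mul, abs_of_pos hb]
  refine ⟨one_pos, by simpa using h.mem, fun t ht => ?_, fun t ht => ?_, fun s hs t ht => ?_,
    h.P_mem, h.Q_mem, fun e => h.P_ne (by simp [e]), fun e => h.Q_ne (by simp [e]),
    fun e => h.P_ne_Q (by rw [e]), ?_, ?_, fun t ht h1 hP hQ => ?_, ?_⟩ <;>
    simp only [Set.mem_ofPred_eq, mul_sub, mul_one] at *
  · exact le_of_mul_le_mul_left (by simpa using h.le _ ht) hb
  · exact h.reflect_mem _ ht
  · simpa only [← habs, mul_add, mul_one, mul_sub] using h.add_sub_mem _ hs _ ht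
  · exact h.P_sub_notMem
  · exact h.Q_sub_notMem
  · exact h.sub_mem _ ht (by simpa using hinj h1) (hinj hP) (hinj hQ)
  · simpa only [← habs, mul_sub] using h.abs_sub_mem

theorem exists_scale (h : LabelPattern b Y c P Q) :
    ∃ c' P' Q', LabelPattern 1 {k | b * k ∈ Y} c' P' Q' := by
  obtain ⟨c', hc'⟩ := h.dvd_of_mem (h.reflect_mem b h.mem)
  obtain ⟨P', rfl⟩ := h.dvd_of_mem h.P_mem
  obtain ⟨Q', rfl⟩ := h.dvd_of_mem h.Q_mem
  obtain rfl : c = b * (c' + 1) := by linear_combination hc'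
  exact ⟨_, _, _, h.scale⟩

theorem sub_one_notMem (h : LabelPattern 1 T c P Q) (ht : t ∈ T) : t - 1 ∉ T := fun ht' =>
  h.add_notMem ht' (by rwa [sub_add_cancel])

theorem sub_two_mem (h : LabelPattern 1 T c P Q) (ht : t ∈ T) (h1 : t ≠ 1) (hP : t ≠ P)
    (hQ : t ≠ Q) : t - 2 ∈ T := by
  simpa [sub_sub, h.sub_one_notMem ht, one_add_one_eq_two] using h.sub_mem t ht h1 hP hQ

theorem P_sub_two_notMem (h : LabelPattern 1 T c P Q) : P - 2 ∉ T := fun hP =>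
  h.P_sub_notMem (Or.inr (by rwa [sub_sub, one_add_one_eq_two]))

theorem sub_two_or_sub_three_mem (h : LabelPattern 1 T c P Q) (ht : t ∈ T) (ht1 : t ≠ 1) :
    t - 2 ∈ T ∨ t - 3 ∈ T := by
  have ht2 : t ≠ 2 := by
    rintro rfl
    exact h.sub_one_notMem ht (by simpa using h.mem)
  have habs : |1 + 1 - t| = t - 2 := by
    rw [abs_of_nonpos (by have := h.le t ht; omega)]; ring
  simpa only [habs, sub_sub, show (2 : ℤ) + 1 = 3 by norm_num] using
    h.add_sub_mem 1 h.mem t ht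

theorem add_two_or_add_three_mem (h : LabelPattern 1 T c P Q) (ht : t ∈ T) (htc : t ≠ c - 1) :
    t + 2 ∈ T ∨ t + 3 ∈ T := by
  rcases h.sub_two_or_sub_three_mem (h.reflect_mem t ht) (by omega) with h' | h'
  · left; convert h.reflect_mem _ h' using 1; ring
  · right; convert h.reflect_mem _ h' using 1; ring

theorem lt_of_mem (h : LabelPattern 1 T c P Q) (ht : t ∈ T) : t < c := by
  have := h.le _ (h.reflect_mem t ht); omega

theorem sub_three_mem_of_sub_two_notMem (h : LabelPattern 1 T c P Q) (ht : t ∈ T) (ht1 : t ≠ 1)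
    (ht2 : t - 2 ∉ T) : t - 3 ∈ T :=
  (h.sub_two_or_sub_three_mem ht ht1).resolve_left ht2

theorem odd_of_lt (h : LabelPattern 1 T c P Q) (hPQ : P < Q) (ht : t ∈ T) (htP : t < P) :
    Odd t := by
  obtain ⟨r, hr⟩ := Int.even_sub_of_sub_two_mem (D := {t ∈ T | t < P}) (a := 1)
    (fun h0 => by simpa using h.le _ h0.1)
    (fun t ht h1 => ⟨h.sub_two_mem ht.1 h1.ne' ht.2.ne (by have := ht.2; omega),
      by have := ht.2; omega⟩) t ⟨ht, htP⟩ (h.le t ht)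
  exact ⟨r, by omega⟩

theorem even_sub_of_lt (h : LabelPattern 1 T c P Q) (ht : t ∈ T) (hPt : P ≤ t) (htQ : t < Q) :
    Even (t - P) :=
  Int.even_sub_of_sub_two_mem (D := {t ∈ T | t < Q}) (a := P)
    (fun h0 => h.sub_one_notMem h.P_mem h0.1)
    (fun t ht hPt => ⟨h.sub_two_mem ht.1 (by have := h.le P h.P_mem; omega) hPt.ne' ht.2.ne,
      by have := ht.2; omega⟩) t ⟨ht, htQ⟩ hPt

theorem even_P (h : LabelPattern 1 T c P Q) (hPQ : P < Q) : Even P := by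
  have hP3 := h.sub_three_mem_of_sub_two_notMem h.P_mem h.P_ne h.P_sub_two_notMem
  obtain ⟨r, hr⟩ := h.odd_of_lt hPQ hP3 (by omega)
  exact ⟨r + 2, by omega⟩

theorem odd_Q_sub_P (h : LabelPattern 1 T c P Q) (hPQ : P < Q) : Odd (Q - P) := by
  have hQ3 := h.sub_three_mem_of_sub_two_notMem h.Q_mem h.Q_ne h.swap.P_sub_two_notMem
  have hPQ3 : P ≤ Q - 3 := by
    have h1 : Q - 3 ≠ P - 1 := fun e => h.sub_one_notMem h.P_mem (e ▸ hQ3)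
    have h2 : Q - 3 ≠ P - 2 := fun e => h.P_sub_two_notMem (e ▸ hQ3)
    omega
  obtain ⟨r, hr⟩ := h.even_sub_of_lt hQ3 hPQ3 (by omega)
  exact ⟨r + 1, by omega⟩

theorem add_two_mul_mem (h : LabelPattern 1 T c P Q) (k : ℕ) (hk : P + 2 * k ≤ Q - 3) :
    P + 2 * k ∈ T := by
  induction k with
  | zero => simpa using h.P_mem
  | succ k ih =>
    have hk' : P + 2 * k ∈ T := ih (by omega)
    rcases h.add_two_or_add_three_mem hk' (by have := h.lt_of_mem h.Q_mem; omega) with h2 | h3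
    · convert h2 using 1; push_cast; ring
    · exfalso
      rcases eq_or_ne (P + 2 * k + 3) (Q - 2) with e | e
      · exact h.swap.P_sub_two_notMem (e ▸ h3)
      · obtain ⟨r, hr⟩ := h.even_sub_of_lt h3 (by omega) (by push_cast at hk; omega)
        omega

theorem Q_le (h : LabelPattern 1 T c P Q) (hPQ : P < Q) : Q ≤ 2 * P - 3 := by
  obtain ⟨p, hp⟩ := h.even_P hPQ
  obtain ⟨q, hq⟩ := h.odd_Q_sub_P hPQ
  have hP := h.le P h.P_mem
  have hQ : Q ≠ 2 * P - 1 := by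
    rintro rfl
    have habs : |P - (2 * P - 1)| = P - 1 := by
      rw [abs_sub_comm, abs_of_pos (by omega)]; ring
    exact h.P_sub_notMem (by simpa only [habs] using h.abs_sub_mem)
  by_contra! hQ'
  have h2P : 2 * P - 2 ∈ T := by
    convert h.add_two_mul_mem (p - 1).toNat (by omega) using 1; omega
  have := h.add_sub_mem _ h2P _ h.P_mem
  rw [show 2 * P - 2 + 1 - P = P - 1 by ring, abs_of_pos (by omega)] at this
  exact h.P_sub_notMem this

theorem false_of_lt (h : LabelPattern 1 T c P Q) (hPQ : P < Q) : False := by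
  have hQ := h.Q_le hPQ
  have hP := h.le P h.P_mem
  have hP1 := h.P_ne
  obtain ⟨q, hq⟩ := h.odd_Q_sub_P hPQ
  have habs : |P - Q| = Q - P := by rw [abs_sub_comm, abs_of_pos (by omega)]
  rcases habs ▸ h.abs_sub_mem with hmem | hmem
  · have := h.add_sub_mem _ hmem _ h.Q_mem
    rw [show Q - P + 1 - Q = -(P - 1) by ring, abs_neg, abs_of_pos (by omega)] at this
    exact h.P_sub_notMem this
  · obtain ⟨r, hr⟩ := h.odd_of_lt hPQ hmem (by omega)
    omega

theorem false (h : LabelPattern b Y c P Q) : False := by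
  obtain ⟨c', P', Q', h'⟩ := h.exists_scale
  exact h'.P_ne_Q.lt_or_gt.elim h'.false_of_lt h'.swap.false_of_lt

end LabelPattern

theorem Fin.two_eq_of_ne_of_ne {a b c : Fin 2} (ha : a ≠ c) (hb : b ≠ c) : a = b := by
  revert a b c; decide

theorem ZMod.natCast_ne_zero_of_lt {m k : ℕ} (hk : 0 < k) (hkm : k < m) : (k : ZMod m) ≠ 0 := by
  rw [Ne, ZMod.natCast_eq_zero_iff]
  exact Nat.not_dvd_of_pos_of_lt hk hkm

theorem eq_zero_of_comp_equiv_eq_add {α : Type*} [Finite α] [Nonempty α] (f : α → ℤ) (e : α ≃ α)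
    {c : ℤ} (h : ∀ x, f (e x) = f x + c) : c = 0 := by
  obtain ⟨x₀, hx₀⟩ := Finite.exists_max f
  obtain ⟨x₁, hx₁⟩ := Finite.exists_min f
  have := h x₀; have := h x₁; have := hx₀ (e x₀); have := hx₁ (e x₁)
  omega

section TwoCycles

variable {m : ℕ}

theorem twoCycles_adj_of_eq_add_one [Nontrivial (ZMod m)] {i : Fin 2} {x y : ZMod m}
    (h : y = x + 1) : (twoCycles m).Adj (i, x) (i, y) := by
  subst h
  refine ⟨rfl, fun e => one_ne_zero (α := ZMod m) ?_, Or.inr (add_sub_cancel_left x 1)⟩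
  simpa using congrArg Prod.snd e

theorem twoCycles_ne_and_not_adj_of_eq_add_two (hm : 4 ≤ m) {i : Fin 2} {x y : ZMod m}
    (h : y = x + 2) : (i, x) ≠ (i, y) ∧ ¬(twoCycles m).Adj (i, x) (i, y) := by
  subst h
  have h1 : (1 : ZMod m) ≠ 0 := by
    exact_mod_cast ZMod.natCast_ne_zero_of_lt (m := m) one_pos (by omega)
  have h2 : (2 : ZMod m) ≠ 0 := by
    exact_mod_cast ZMod.natCast_ne_zero_of_lt (m := m) two_pos (by omega)
  have h3 : (3 : ZMod m) ≠ 0 := by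
    exact_mod_cast ZMod.natCast_ne_zero_of_lt (m := m) three_pos (by omega)
  refine ⟨fun e => h2 (by linear_combination -congrArg Prod.snd e), ?_⟩
  rintro ⟨-, -, e | e⟩
  · exact h3 (by linear_combination -e)
  · exact h1 (by linear_combination e)

theorem twoCycles_exists_adj_not_adj (hm : 4 ≤ m) {v w : Fin 2 × ZMod m}
    (h : (twoCycles m).Adj v w) : ∃ u, (twoCycles m).Adj w u ∧ v ≠ u ∧ ¬(twoCycles m).Adj v u := by
  have : Fact (1 < m) := ⟨by omega⟩
  obtain ⟨i, x⟩ := v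
  obtain ⟨j, y⟩ := w
  obtain ⟨rfl : i = j, -, hxy | hxy⟩ := h
  · obtain ⟨hne, hnadj⟩ := twoCycles_ne_and_not_adj_of_eq_add_two hm (i := i) (x := y - 1)
      (y := x) (by linear_combination hxy)
    exact ⟨(i, y - 1), (twoCycles_adj_of_eq_add_one (by ring)).symm, hne.symm,
      fun h => hnadj h.symm⟩
  · obtain ⟨hne, hnadj⟩ := twoCycles_ne_and_not_adj_of_eq_add_two hm (i := i) (x := x)
      (y := x + 2) rfl
    exact ⟨(i, x + 2), twoCycles_adj_of_eq_add_one (by linear_combination -hxy), hne, hnadj⟩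

theorem twoCycles_fst_eq_of_adj_add_one {g : ZMod m → Fin 2 × ZMod m}
    (hg : ∀ x, (twoCycles m).Adj (g x) (g (x + 1))) (x : ZMod m) : (g x).1 = (g 0).1 := by
  obtain ⟨k, rfl⟩ := ZMod.intCast_surjective x
  induction k using Int.induction_on with
  | zero => simp
  | succ k ih => push_cast at ih ⊢; exact (hg _).1.symm.trans ih
  | pred k ih =>
    push_cast at ih ⊢
    exact (hg _).1.trans (by rwa [sub_add_cancel])

theorem mem_range_iff_of_shift {ℓ : Fin 2 × ZMod m → ℤ} {i j : Fin 2} {b : ℤ}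
    {e : ZMod m ≃ ZMod m}
    (he : ∀ x, ℓ (i, x) = ℓ (j, e x) + b) (hij : i ≠ j) (t : ℤ) :
    t ∈ Set.range ℓ ↔ t ∈ Set.range (fun y => ℓ (j, y)) ∨ t - b ∈ Set.range (fun y => ℓ (j, y)) := by
  constructor
  · rintro ⟨⟨k, x⟩, rfl⟩
    rcases eq_or_ne k j with rfl | hk
    · exact Or.inl ⟨x, rfl⟩
    · obtain rfl := Fin.two_eq_of_ne_of_ne hk hij
      exact Or.inr ⟨e x, by rw [he]; ring⟩
  · rintro (⟨y, hy⟩ | ⟨y, hy : ℓ (j, y) = t - b⟩)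
    · exact ⟨(j, y), hy⟩
    · exact ⟨(i, e.symm y), by rw [he, Equiv.apply_symm_apply, hy]; ring⟩

end TwoCycles

/-- The signature is the multiset of values of `ℓ`, and `ℓ` is the inverse of the bijection `π`. -/
def IsSignature {V : Type*} (G : SimpleGraph V) (ℓ : V → ℤ) : Prop :=
  ∀ v w, v ≠ w → (G.Adj v w ↔ |ℓ v - ℓ w| ∈ Set.range ℓ)

namespace IsSignature

section General

variable {V : Type*} {G : SimpleGraph V} {ℓ : V → ℤ} {u v w : V}

theorem abs_sub_notMem (hℓ : IsSignature Gᶜ ℓ) (h : G.Adj v w) : |ℓ v - ℓ w| ∉ Set.range ℓ :=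
  fun hmem => ((hℓ v w h.ne).mpr hmem).2 h

theorem abs_sub_mem (hℓ : IsSignature Gᶜ ℓ) (hne : v ≠ w) (h : ¬G.Adj v w) :
    |ℓ v - ℓ w| ∈ Set.range ℓ :=
  (hℓ v w hne).mp ⟨hne, h⟩

theorem ne_of_adj_of_not_adj (hℓ : IsSignature Gᶜ ℓ) (hwu : G.Adj w u) (hvu : v ≠ u)
    (hnadj : ¬G.Adj v u) : ℓ v ≠ ℓ w := fun e =>
  hℓ.abs_sub_notMem hwu (e ▸ hℓ.abs_sub_mem hvu hnadj)

theorem neg_of_adj_of_eq_zero (hℓ : IsSignature Gᶜ ℓ) (h : G.Adj v w) (hv : ℓ v = 0) :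
    ℓ w < 0 := by
  by_contra! hw
  exact hℓ.abs_sub_notMem h ⟨w, by rw [hv, zero_sub, abs_neg, abs_of_nonneg hw]⟩

theorem nonneg_of_not_adj (hℓ : IsSignature Gᶜ ℓ) (hmax : ∀ u, ℓ u ≤ ℓ v) (hne : v ≠ w)
    (h : ¬G.Adj v w) : 0 ≤ ℓ w := by
  obtain ⟨u, hu⟩ := hℓ.abs_sub_mem hne h
  have := hmax u
  rw [abs_of_nonneg (by linarith [hmax w])] at hu
  omega

theorem injective_of_ne_of_adj (hℓ : IsSignature Gᶜ ℓ) (hne : ∀ v w, G.Adj v w → ℓ v ≠ ℓ w)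
    (h0 : 0 ∉ Set.range ℓ) : Function.Injective ℓ := by
  intro v w e
  by_contra hvw
  by_cases h : G.Adj v w
  · exact hne v w h e
  · exact h0 (by simpa [e] using hℓ.abs_sub_mem hvw h)

end General

variable {m : ℕ} {ℓ : Fin 2 × ZMod m → ℤ} {v w z : Fin 2 × ZMod m} {i j : Fin 2}

theorem abs_sub_mem_of_fst_ne (hℓ : IsSignature (twoCycles m)ᶜ ℓ) (h : v.1 ≠ w.1) :
    |ℓ v - ℓ w| ∈ Set.range ℓ :=
  hℓ.abs_sub_mem (fun e => h (congrArg Prod.fst e)) (fun hadj => h hadj.1)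

theorem sub_mem_of_fst_ne (hℓ : IsSignature (twoCycles m)ᶜ ℓ) (h : v.1 ≠ w.1) (hle : ℓ w ≤ ℓ v) :
    ℓ v - ℓ w ∈ Set.range ℓ :=
  abs_of_nonneg (sub_nonneg.mpr hle) ▸ hℓ.abs_sub_mem_of_fst_ne h

theorem ne_of_twoCycles_adj (hm : 4 ≤ m) (hℓ : IsSignature (twoCycles m)ᶜ ℓ)
    (h : (twoCycles m).Adj v w) : ℓ v ≠ ℓ w :=
  have ⟨_, hwu, hvu, hnadj⟩ := twoCycles_exists_adj_not_adj hm h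
  hℓ.ne_of_adj_of_not_adj hwu hvu hnadj

theorem pos_of_fst_ne [Nontrivial (ZMod m)] (hℓ : IsSignature (twoCycles m)ᶜ ℓ)
    (hmax : ∀ u, ℓ u ≤ ℓ v) (hw : w.1 ≠ v.1) : 0 < ℓ w := by
  have hnonneg : ∀ u : Fin 2 × ZMod m, u.1 ≠ v.1 → 0 ≤ ℓ u := fun u hu =>
    hℓ.nonneg_of_not_adj hmax (fun e => hu (congrArg Prod.fst e).symm) (fun h => hu h.1.symm)
  refine (hnonneg w hw).lt_of_ne' fun h0 => ?_
  have := hℓ.neg_of_adj_of_eq_zero (twoCycles_adj_of_eq_add_one (i := w.1) (x := w.2) rfl) h0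
  have := hnonneg (w.1, w.2 + 1) hw
  omega

theorem max_pos [Nontrivial (ZMod m)] (hℓ : IsSignature (twoCycles m)ᶜ ℓ)
    (hmax : ∀ u, ℓ u ≤ ℓ v) : 0 < ℓ v := by
  obtain ⟨j, hj⟩ := exists_ne v.1
  exact (hℓ.pos_of_fst_ne hmax (w := (j, 0)) hj).trans_le (hmax _)

theorem twoCycles_adj_of_neg [Nontrivial (ZMod m)] (hℓ : IsSignature (twoCycles m)ᶜ ℓ)
    (hmax : ∀ u, ℓ u ≤ ℓ v) (hw : ℓ w < 0) : (twoCycles m).Adj v w := by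
  by_contra h
  have := hℓ.max_pos hmax
  have := hℓ.nonneg_of_not_adj hmax (by rintro rfl; omega) h
  omega

/-- Both cycle neighbours of a vertex labelled `0` carry negative labels, so both are cycle
neighbours of the maximum. -/
theorem eq_four_of_eq_zero (hm : 4 ≤ m) (hℓ : IsSignature (twoCycles m)ᶜ ℓ)
    (hmax : ∀ u, ℓ u ≤ ℓ v) (hz : ℓ z = 0) : m = 4 ∧ v = (z.1, z.2 + 2) := by
  have : Fact (1 < m) := ⟨by omega⟩
  have hz1 : z.1 = v.1 := by
    by_contra h
    have := hℓ.pos_of_fst_ne hmax h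
    omega
  have hzv : z.2 ≠ v.2 := fun e => by
    have := hℓ.max_pos hmax
    rw [show z = v from Prod.ext hz1 e] at hz
    omega
  have hp := hℓ.twoCycles_adj_of_neg hmax
    (hℓ.neg_of_adj_of_eq_zero (twoCycles_adj_of_eq_add_one (i := z.1) (x := z.2) rfl) hz)
  have hq := hℓ.twoCycles_adj_of_neg hmax (hℓ.neg_of_adj_of_eq_zero
    (twoCycles_adj_of_eq_add_one (i := z.1) (x := z.2 - 1) (y := z.2) (by ring)).symm hz)
  rcases hp.2.2 with hp | hp
  · refine ⟨?_, Prod.ext hz1.symm (by linear_combination hp)⟩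
    rcases hq.2.2 with hq | hq
    · exact absurd (by linear_combination -hq) hzv
    · have h4 : ((4 : ℕ) : ZMod m) = 0 := by push_cast; linear_combination -hp - hq
      have := Nat.le_of_dvd four_pos ((ZMod.natCast_eq_zero_iff 4 m).mp h4)
      omega
  · exact absurd (by linear_combination hp) hzv

/-- For the neighbour `p` of the vertex labelled `0` and the greatest label `β` of the other cycle,
the label `β - ℓ p` can only sit at the maximum `α`; then `α - β = |ℓ p - 0|` is a label,
although it is the label difference along an edge. -/
theorem false_of_eq_zero_of_four {ℓ : Fin 2 × ZMod 4 → ℤ} (hℓ : IsSignature (twoCycles 4)ᶜ ℓ)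
    {x : ZMod 4} (hmax : ∀ u, ℓ u ≤ ℓ (i, x + 2)) (hz : ℓ (i, x) = 0) : False := by
  have : Fact (1 < 4) := ⟨by norm_num⟩
  obtain ⟨j, hj⟩ := exists_ne i
  obtain ⟨y, hy⟩ := Finite.exists_max fun y => ℓ (j, y)
  have hzp : (twoCycles 4).Adj (i, x) (i, x + 1) := twoCycles_adj_of_eq_add_one rfl
  have hp := hℓ.neg_of_adj_of_eq_zero hzp hz
  have hβ := hℓ.pos_of_fst_ne hmax (w := (j, y)) hj
  obtain ⟨⟨k, x'⟩, hu⟩ := hℓ.sub_mem_of_fst_ne (v := (j, y)) (w := (i, x + 1)) hj (by omega)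
  obtain rfl : i = k := by
    by_contra hk
    have := hy x'
    rw [Fin.two_eq_of_ne_of_ne (Ne.symm hk) hj] at hu
    omega
  have hx' : x' = x + 2 := by
    have : ∀ a b : ZMod 4, b = a ∨ b = a + 1 ∨ b = a + 2 ∨ a = b + 1 := by decide
    rcases this x x' with rfl | rfl | h | h
    · omega
    · omega
    · exact h
    · have := hℓ.neg_of_adj_of_eq_zero (twoCycles_adj_of_eq_add_one h).symm hz
      omega
  subst hx'
  apply hℓ.abs_sub_notMem hzp
  rw [hz, zero_sub, abs_neg, abs_of_neg hp]
  convert hℓ.sub_mem_of_fst_ne (v := (i, x + 2)) (w := (j, y)) hj.symm (hmax _) using 1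
  omega

theorem zero_notMem_range (hm : 4 ≤ m) (hℓ : IsSignature (twoCycles m)ᶜ ℓ) :
    0 ∉ Set.range ℓ := by
  rintro ⟨z, hz⟩
  have : Fact (1 < m) := ⟨by omega⟩
  obtain ⟨v, hv⟩ := Finite.exists_max ℓ
  obtain ⟨rfl, rfl⟩ := hℓ.eq_four_of_eq_zero hm hv hz
  exact hℓ.false_of_eq_zero_of_four hv hz

theorem injective (hm : 4 ≤ m) (hℓ : IsSignature (twoCycles m)ᶜ ℓ) : Function.Injective ℓ :=
  hℓ.injective_of_ne_of_adj (fun _ _ h => hℓ.ne_of_twoCycles_adj hm h) (hℓ.zero_notMem_range hm)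

theorem exists_equiv_of_isometry [Fact (1 < m)] (hℓ : IsSignature (twoCycles m)ᶜ ℓ)
    (hinj : Function.Injective ℓ) {f : ℤ → ℤ} (hf : ∀ a b, |f a - f b| = |a - b|) (i : Fin 2)
    (hmem : ∀ x, f (ℓ (i, x)) ∈ Set.range ℓ) :
    ∃ (k : Fin 2) (e : ZMod m ≃ ZMod m), ∀ x, ℓ (k, e x) = f (ℓ (i, x)) := by
  choose F hF using hmem
  have hFinj : Function.Injective F := fun x y e => by
    have := hf (ℓ (i, x)) (ℓ (i, y))
    rw [← hF, ← hF, e, sub_self, abs_zero, eq_comm, abs_eq_zero, sub_eq_zero] at this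
    exact congrArg Prod.snd (hinj this)
  have hadj : ∀ x, (twoCycles m).Adj (F x) (F (x + 1)) := fun x => by
    by_contra h
    have := hℓ.abs_sub_mem (hFinj.ne (by simp)) h
    rw [hF, hF, hf] at this
    exact hℓ.abs_sub_notMem (twoCycles_adj_of_eq_add_one rfl) this
  have hfst := twoCycles_fst_eq_of_adj_add_one hadj
  have hsnd : Function.Injective fun x => (F x).2 := fun x y e =>
    hFinj (Prod.ext ((hfst x).trans (hfst y).symm) e)
  exact ⟨(F 0).1, Equiv.ofBijective _ hsnd.bijective_of_finite, fun x => by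
    rw [← hF x, Equiv.ofBijective_apply, ← hfst x]⟩

theorem exists_reflection [Fact (1 < m)] (hℓ : IsSignature (twoCycles m)ᶜ ℓ)
    (hinj : Function.Injective ℓ) (hmax : ∀ u, ℓ u ≤ ℓ v) (hj : j ≠ v.1) (y : ZMod m) :
    ∃ y', ℓ (j, y') = ℓ v - ℓ (j, y) := by
  obtain ⟨k, e, he⟩ := hℓ.exists_equiv_of_isometry hinj (f := (ℓ v - ·))
    (fun a b => by rw [sub_sub_sub_cancel_left, abs_sub_comm]) j
    (fun y => hℓ.sub_mem_of_fst_ne (w := (j, y)) hj.symm (hmax _))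
  obtain rfl : j = k := by
    by_contra hk
    have := he (e.symm v.2)
    rw [Equiv.apply_symm_apply, Fin.two_eq_of_ne_of_ne (Ne.symm hk) hj.symm, Prod.mk.eta] at this
    have := hℓ.pos_of_fst_ne hmax (w := (j, e.symm v.2)) hj
    omega
  exact ⟨e y, he y⟩

/-- Otherwise `t ↦ t - ℓ w` carries the labels of the other cycle onto those of a cycle: of the
same one only if `ℓ w = 0`; of the cycle of the maximum `α` only if `α = β - ℓ w` and
`ℓ w = (α - β) - ℓ w`, where `β` and (by the reflection) `α - β` are the extreme labels of the other
cycle, which is impossible as `β < α`. -/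
theorem fst_ne_of_min (hm : 4 ≤ m) (hℓ : IsSignature (twoCycles m)ᶜ ℓ)
    (hmax : ∀ u, ℓ u ≤ ℓ v) (hmin : ∀ u, ℓ w ≤ ℓ u) : w.1 ≠ v.1 := by
  have : Fact (1 < m) := ⟨by omega⟩
  have hinj := hℓ.injective hm
  intro hwv
  obtain ⟨j, hj⟩ := exists_ne v.1
  obtain ⟨y, hy⟩ := Finite.exists_max fun y => ℓ (j, y)
  have hYmin : ∀ y', ℓ v - ℓ (j, y) ≤ ℓ (j, y') := fun y' => by
    obtain ⟨y'', h⟩ := hℓ.exists_reflection hinj hmax hj y'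
    have := hy y''
    omega
  have hβ : ℓ (j, y) < ℓ v := (hmax _).lt_of_ne fun e => hj (congrArg Prod.fst (hinj e))
  obtain ⟨k, e, he⟩ := hℓ.exists_equiv_of_isometry hinj (f := (· - ℓ w))
    (fun a b => by rw [sub_sub_sub_cancel_right]) j
    (fun y => hℓ.sub_mem_of_fst_ne (v := (j, y)) (hwv ▸ hj) (hmin _))
  rcases eq_or_ne j k with rfl | hk
  · have := eq_zero_of_comp_equiv_eq_add (fun y => ℓ (j, y)) e (c := -ℓ w)
      (fun y => by rw [he]; ring)
    exact hℓ.zero_notMem_range hm ⟨w, by omega⟩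
  · have hk' := Fin.two_eq_of_ne_of_ne hk.symm hj.symm
    have h1 := he (e.symm v.2)
    have h2 := he (e.symm w.2)
    rw [Equiv.apply_symm_apply, hk', Prod.mk.eta] at h1
    rw [Equiv.apply_symm_apply, hk', ← hwv, Prod.mk.eta] at h2
    have := hy (e.symm v.2)
    have := hYmin (e.symm w.2)
    omega

theorem exists_shift (hm : 4 ≤ m) (hℓ : IsSignature (twoCycles m)ᶜ ℓ) (hmin : ∀ u, ℓ w ≤ ℓ u)
    (hw : 0 < ℓ w) (hi : i ≠ w.1) :
    ∃ e : ZMod m ≃ ZMod m, ∀ x, ℓ (i, x) = ℓ (w.1, e x) + ℓ w := by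
  have : Fact (1 < m) := ⟨by omega⟩
  obtain ⟨k, e, he⟩ := hℓ.exists_equiv_of_isometry (hℓ.injective hm) (f := (· - ℓ w))
    (fun a b => by rw [sub_sub_sub_cancel_right]) i
    (fun x => hℓ.sub_mem_of_fst_ne (v := (i, x)) hi (hmin _))
  obtain rfl : w.1 = k := by
    by_contra hk
    obtain rfl := Fin.two_eq_of_ne_of_ne (Ne.symm hk) hi
    have := eq_zero_of_comp_equiv_eq_add (fun x => ℓ (k, x)) e (c := -ℓ w)
      (fun x => by rw [he]; ring)
    omega
  exact ⟨e, fun x => by rw [he]; ring⟩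

theorem labelPattern (hm : 4 ≤ m) (hℓ : IsSignature (twoCycles m)ᶜ ℓ) (hmin : ∀ u, ℓ w ≤ ℓ u)
    (hw : 0 < ℓ w) (hi : i ≠ w.1) {e : ZMod m ≃ ZMod m} (he : ∀ x, ℓ (i, x) = ℓ (w.1, e x) + ℓ w)
    {c : ℤ} (hc : ∀ y, ∃ y', ℓ (w.1, y') = c - ℓ (w.1, y)) :
    LabelPattern (ℓ w) (Set.range fun y => ℓ (w.1, y)) c (ℓ (w.1, w.2 + 1)) (ℓ (w.1, w.2 - 1)) := by
  have : Fact (1 < m) := ⟨by omega⟩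
  have hinj := hℓ.injective hm
  have hrange := mem_range_iff_of_shift he hi
  have hP : (twoCycles m).Adj w (w.1, w.2 + 1) := twoCycles_adj_of_eq_add_one rfl
  have hQ : (twoCycles m).Adj (w.1, w.2 - 1) w := twoCycles_adj_of_eq_add_one (by ring)
  have hPQ := twoCycles_ne_and_not_adj_of_eq_add_two hm (i := w.1) (x := w.2 - 1)
    (y := w.2 + 1) (by ring)
  refine ⟨hw, ⟨w.2, rfl⟩, ?_, ?_, ?_, ⟨_, rfl⟩, ⟨_, rfl⟩, fun h => hP.ne (hinj h).symm,
    fun h => hQ.ne (hinj h), fun h => hPQ.1 (hinj h).symm, ?_, ?_, ?_, ?_⟩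
  · rintro _ ⟨y, rfl⟩
    exact hmin _
  · rintro _ ⟨y, rfl⟩
    exact hc y
  · rintro _ ⟨y, rfl⟩ _ ⟨y', rfl⟩
    rw [← hrange]
    simpa [he] using hℓ.abs_sub_mem_of_fst_ne (v := (i, e.symm y)) (w := (w.1, y')) hi
  · rw [← hrange, ← abs_of_nonneg (sub_nonneg.mpr (hmin _)), abs_sub_comm]
    exact hℓ.abs_sub_notMem hP
  · rw [← hrange, ← abs_of_nonneg (sub_nonneg.mpr (hmin _))]
    exact hℓ.abs_sub_notMem hQ
  · rintro _ ⟨y, rfl⟩ hb hP' hQ'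
    rw [← hrange, ← abs_of_nonneg (sub_nonneg.mpr (hmin _))]
    refine hℓ.abs_sub_mem (fun h => hb (congrArg ℓ h)) ?_
    rintro ⟨-, -, h | h⟩
    · exact hP' (by rw [show y = w.2 + 1 by linear_combination h])
    · exact hQ' (by rw [show y = w.2 - 1 by linear_combination -h])
  · rw [← hrange]
    exact hℓ.abs_sub_mem hPQ.1.symm fun h => hPQ.2 h.symm

theorem not_isSignature (hm : 4 ≤ m) (ℓ : Fin 2 × ZMod m → ℤ) :
    ¬IsSignature (twoCycles m)ᶜ ℓ := by
  intro hℓ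
  have : Fact (1 < m) := ⟨by omega⟩
  obtain ⟨v, hv⟩ := Finite.exists_max ℓ
  obtain ⟨w, hw⟩ := Finite.exists_min ℓ
  have hwv := hℓ.fst_ne_of_min hm hv hw
  have hpos := hℓ.pos_of_fst_ne hv hwv
  obtain ⟨e, he⟩ := hℓ.exists_shift hm hw hpos hwv.symm
  exact (hℓ.labelPattern hm hw hpos hwv.symm he
    (hℓ.exists_reflection (hℓ.injective hm) hv hwv)).false

end IsSignature

theorem Gn_not_autograph_general (n : ℕ) (hn : 8 ≤ n) :
    ¬ ∃ ℓ : Fin 2 × ZMod (n / 2) → ℤ,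
        ∀ v w : Fin 2 × ZMod (n / 2), v ≠ w →
          ((twoCycles (n / 2))ᶜ.Adj v w ↔ ∃ u, ℓ u = |ℓ v - ℓ w|) := by
  rintro ⟨ℓ, hℓ⟩
  exact IsSignature.not_isSignature (by omega) ℓ hℓ

/-- For every even `n ≥ 8`, the graph `G_n`, the complement of the disjoint union of
two cycles of length `n/2`, is not an autograph: it admits no (multiset) signature,
i.e. no integer labeling `ℓ` of its vertices such that distinct vertices `v, w` are
adjacent iff `|ℓ v - ℓ w|` is one of the labels. -/
theorem Gn_not_autograph (n : ℕ) (hn : 8 ≤ n) (heven : Even n) :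
    ¬ ∃ ℓ : Fin 2 × ZMod (n / 2) → ℤ,
        ∀ v w : Fin 2 × ZMod (n / 2), v ≠ w →
          ((twoCycles (n / 2))ᶜ.Adj v w ↔ ∃ u, ℓ u = |ℓ v - ℓ w|) :=
  Gn_not_autograph_general n hn
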